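/- (Transfer of small-time asymptotics through an inverse subordinator.) Suppose the Laplace exponent φ is regularly varying at ∞ with index β ∈ (0,1). Let α ∈ (0,2), let c > 0, and let F : (0,∞) → [0,∞) be a bounded measurable function with F(s) ~ c f_α(s) as s ↓ 0. Then for every δ > 0, E[F(E_t)] ~ c E[f_α(E_t) ; E_t ≤ δ] as t ↓ 0, where E[f_α(E_t) ; E_t ≤ δ] denotes the expectation of f_α(E_t) restricted to the event {0 < E_t ≤ δ}. -/

import Mathlib

open MeasureTheory Filter Set

/-- `fα(t)`: the rate function `t^{1/α}` for `α ∈ (1,2)`, `t ln(1/t)` for `α = 1`,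
and `t` for `α ∈ (0,1)`. -/
noncomputable def falpha (α t : ℝ) : ℝ :=
  if 1 < α then t ^ (1 / α) else if α = 1 then t * Real.log (1 / t) else t

/-!
Write `I(t) = E[fα(E_t); 0 < E_t ≤ δ]`. Cutting at a small level `η`, where `F ≈ c fα`, gives
`|E F(E_t) - c I(t)| ≤ ε c I(t) + C P(E_t > η)`, so it suffices that every tail `P(E_t > η)` is
`o(I(t))` as `t ↓ 0`. Since `{E_t > η} ⊆ {D_η ≤ t}`, Chernoff's bound with `λ = 1/t` gives
`P(E_t > η) ≤ e^{1 - η φ(1/t)}`; the reverse bound `E e^{-λ D_u} ≤ P(D_u ≤ t) + e^{-λ t}` with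
`λ = 2/t`, `u = 1/φ(2/t)` gives `P(E_t ≥ u) ≥ e^{-1} - e^{-2}`, hence `I(t) ≳ 1/φ(2/t)` because
`fα(s) ≥ s` near `0`. Regular variation keeps `φ(2λ)/φ(λ)` bounded, so `e^{-η φ(1/t)}` is
`o(1/φ(2/t))`.
-/

open Asymptotics Topology ProbabilityTheory Real

lemma measurable_falpha (α : ℝ) : Measurable (falpha α) := by
  unfold falpha
  split_ifs <;> fun_prop

lemma self_le_falpha (α : ℝ) {s : ℝ} (hs : 0 < s) (hse : s ≤ exp (-1)) : s ≤ falpha α s := by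
  have hs1 : s ≤ 1 := hse.trans (exp_le_one_iff.2 (by norm_num))
  unfold falpha
  split_ifs with h1 h2
  · calc s = s ^ (1 : ℝ) := (rpow_one s).symm
      _ ≤ s ^ (1 / α) := rpow_le_rpow_of_exponent_ge hs hs1 ((div_le_one (by linarith)).2 h1.le)
  · have hlog : 1 ≤ log (1 / s) := by
      rw [one_div, log_inv, le_neg, ← log_exp (-1)]
      exact log_le_log hs hse
    nlinarith
  · exact le_rfl

lemma exists_abs_falpha_le (α δ : ℝ) : ∃ B, ∀ s ∈ Ioc 0 δ, |falpha α s| ≤ B := by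
  obtain ⟨f, hf, hfalpha⟩ : ∃ f : ℝ → ℝ, Continuous f ∧ ∀ s, 0 < s → falpha α s = f s := by
    unfold falpha
    split_ifs with h1 h2
    · exact ⟨_, continuous_rpow_const (one_div_pos.2 (by linarith)).le, fun _ _ => rfl⟩
    · refine ⟨fun s => -(s * log s), continuous_mul_log.neg, fun s _ => ?_⟩
      rw [one_div, log_inv, mul_neg]
    · exact ⟨id, continuous_id, fun _ _ => rfl⟩
  obtain ⟨B, hB⟩ := isCompact_Icc.exists_bound_of_continuousOn (hf.continuousOn (s := Icc 0 δ))
  exact ⟨B, fun s hs => hfalpha s hs.1 ▸ hB s (Ioc_subset_Icc_self hs)⟩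

noncomputable def firstPassageTime (d : ℝ → ℝ) (t : ℝ) : ℝ := sInf {u : ℝ | 0 < u ∧ t < d u}

section FirstPassageTime

variable {d : ℝ → ℝ} {t u : ℝ}

lemma firstPassageTime_le (hu : 0 < u) (h : t < d u) : firstPassageTime d t ≤ u :=
  csInf_le ⟨0, fun _ hv => hv.1.le⟩ ⟨hu, h⟩

lemma le_firstPassageTime (hmono : MonotoneOn d (Ici 0))
    (hunb : ∀ M, ∃ v, 0 ≤ v ∧ M < d v) (hu : 0 < u) (h : d u ≤ t) :
    u ≤ firstPassageTime d t := by
  obtain ⟨v, hv, htv⟩ := hunb t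
  refine le_csInf ⟨v + 1, by linarith, htv.trans_le (hmono hv (show (0 : ℝ) ≤ v + 1 by linarith) (by linarith))⟩ ?_
  rintro w ⟨hw, htw⟩
  by_contra! hwu
  exact (htw.trans_le (hmono hw.le hu.le hwu.le)).not_ge h

lemma firstPassageTime_pos (hd0 : d 0 = 0) (hcont : ContinuousWithinAt d (Ici 0) 0)
    (hmono : MonotoneOn d (Ici 0)) (hunb : ∀ M, ∃ v, 0 ≤ v ∧ M < d v) (ht : 0 < t) :
    0 < firstPassageTime d t := by
  have hsmall : ∀ᶠ v in 𝓝[>] 0, d v < t :=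
    nhdsWithin_mono _ Ioi_subset_Ici_self ((hd0 ▸ hcont.tendsto).eventually_lt_const ht)
  obtain ⟨u, hut, hu⟩ := (hsmall.and self_mem_nhdsWithin).exists
  exact (show (0:ℝ) < u from hu).trans_le (le_firstPassageTime hmono hunb hu hut.le)

end FirstPassageTime

section Integral

variable {Ω : Type*} [MeasurableSpace Ω] {P : Measure Ω} {X : Ω → ℝ}

lemma setIntegral_preimage_eq_integral_indicator (hX : Measurable X) {s : Set ℝ}
    (hs : MeasurableSet s) (g : ℝ → ℝ) :
    ∫ ω in X ⁻¹' s, g (X ω) ∂P = ∫ ω, s.indicator g (X ω) ∂P := by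
  rw [← integral_indicator (hX hs)]
  simp_rw [← indicator_comp_right]
  rfl

lemma integral_indicator_one_comp (hX : Measurable X) {s : Set ℝ} (hs : MeasurableSet s) :
    ∫ ω, s.indicator 1 (X ω) ∂P = P.real (X ⁻¹' s) := by
  rw [← setIntegral_preimage_eq_integral_indicator hX hs]
  simp

lemma integrable_indicator_one_comp [IsFiniteMeasure P] (hX : Measurable X) {s : Set ℝ}
    (hs : MeasurableSet s) : Integrable (fun ω => s.indicator (1 : ℝ → ℝ) (X ω)) P :=
  (integrable_const 1).indicator (hX hs)

lemma integrable_exp_neg_mul [IsFiniteMeasure P] (hX : Measurable X) (hX0 : ∀ ω, 0 ≤ X ω)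
    {l : ℝ} (hl : 0 ≤ l) : Integrable (fun ω => exp (-l * X ω)) P :=
  .of_bound (by fun_prop) 1 <| .of_forall fun ω => by
    rw [norm_of_nonneg (exp_pos _).le, exp_le_one_iff]
    nlinarith [hX0 ω]

lemma measureReal_le_le_exp_mul_integral [IsFiniteMeasure P] (hX : Measurable X)
    (hX0 : ∀ ω, 0 ≤ X ω) {l : ℝ} (hl : 0 ≤ l) (s : ℝ) :
    P.real {ω | X ω ≤ s} ≤ exp (l * s) * ∫ ω, exp (-l * X ω) ∂P := by
  simpa [mgf] using
    measure_le_le_exp_mul_mgf (μ := P) (X := X) s (neg_nonpos.2 hl)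
      (integrable_exp_neg_mul hX hX0 hl)

lemma integral_exp_neg_mul_le [IsProbabilityMeasure P] (hX : Measurable X)
    (hX0 : ∀ ω, 0 ≤ X ω) {l : ℝ} (hl : 0 ≤ l) (s : ℝ) :
    ∫ ω, exp (-l * X ω) ∂P ≤ P.real {ω | X ω ≤ s} + exp (-l * s) := by
  have hpt : ∀ ω, exp (-l * X ω) ≤ (Iic s).indicator 1 (X ω) + exp (-l * s) := by
    intro ω
    by_cases h : X ω ≤ s
    · rw [indicator_of_mem (show X ω ∈ Iic s from h), Pi.one_apply]
      have : exp (-l * X ω) ≤ 1 := exp_le_one_iff.2 (by nlinarith [hX0 ω])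
      linarith [exp_pos (-l * s)]
    · rw [indicator_of_notMem (show X ω ∉ Iic s from h), zero_add]
      exact exp_le_exp.2 (by nlinarith)
  calc ∫ ω, exp (-l * X ω) ∂P
      ≤ ∫ ω, ((Iic s).indicator 1 (X ω) + exp (-l * s)) ∂P :=
        integral_mono (integrable_exp_neg_mul hX hX0 hl)
          ((integrable_indicator_one_comp hX measurableSet_Iic).add (integrable_const _)) hpt
    _ = P.real {ω | X ω ≤ s} + exp (-l * s) := by
        rw [integral_add (integrable_indicator_one_comp hX measurableSet_Iic) (integrable_const _),
          integral_indicator_one_comp hX measurableSet_Iic, integral_const, probReal_univ,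
          smul_eq_mul, one_mul]
        rfl

end Integral

section Truncation

variable {F G : ℝ → ℝ} {M B ε η δ a u s : ℝ}

lemma abs_sub_indicator_Ioc_le (hFM : ∀ s, |F s| ≤ M) (hGB : ∀ s ∈ Ioc 0 δ, |G s| ≤ B)
    (hε : 0 ≤ ε) (hη : 0 < η) (hηδ : η ≤ δ) (hFG : ∀ s ∈ Ioc 0 η, |F s - G s| ≤ ε * G s)
    (hs : 0 < s) :
    |F s - (Ioc 0 δ).indicator G s| ≤
      ε * (Ioc 0 δ).indicator G s + (M + (1 + ε) * B) * (Ioi η).indicator 1 s := by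
  have hB : 0 ≤ B := (abs_nonneg _).trans (hGB η ⟨hη, hηδ⟩)
  rcases le_or_gt s η with hsη | hηs
  · rw [indicator_of_mem (show s ∈ Ioc 0 δ from ⟨hs, hsη.trans hηδ⟩),
      indicator_of_notMem (show s ∉ Ioi η from not_lt.2 hsη), mul_zero, add_zero]
    exact hFG s ⟨hs, hsη⟩
  rw [indicator_of_mem (show s ∈ Ioi η from hηs), Pi.one_apply, mul_one]
  have hF := abs_le.1 (hFM s)
  by_cases hsδ : s ≤ δ
  · rw [indicator_of_mem (show s ∈ Ioc 0 δ from ⟨hs, hsδ⟩)]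
    have hG := abs_le.1 (hGB s ⟨hs, hsδ⟩)
    rw [abs_le]
    constructor <;> nlinarith
  · rw [indicator_of_notMem (fun h => hsδ h.2), sub_zero, mul_zero, zero_add]
    nlinarith [hFM s]

lemma mul_indicator_Ici_sub_le_indicator_Ioc (hGa : ∀ s ∈ Ioc 0 a, s ≤ G s)
    (hGB : ∀ s ∈ Ioc 0 δ, |G s| ≤ B) (hu : 0 < u) (hua : u ≤ a) (haδ : a ≤ δ) :
    u * (Ici u).indicator 1 s - (u + B) * (Ioi a).indicator 1 s ≤ (Ioc 0 δ).indicator G s := by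
  have hB : 0 ≤ B := (abs_nonneg _).trans (hGB a ⟨hu.trans_le hua, haδ⟩)
  rcases le_or_gt s a with hsa | has
  · rw [indicator_of_notMem (show s ∉ Ioi a from not_lt.2 hsa), mul_zero, sub_zero]
    rcases le_or_gt u s with hus | hsu
    · rw [indicator_of_mem (show s ∈ Ici u from hus), indicator_of_mem
        (show s ∈ Ioc 0 δ from ⟨hu.trans_le hus, hsa.trans haδ⟩), Pi.one_apply, mul_one]
      exact hus.trans (hGa s ⟨hu.trans_le hus, hsa⟩)
    · rw [indicator_of_notMem (show s ∉ Ici u from not_le.2 hsu), mul_zero]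
      by_cases hs : 0 < s
      · rw [indicator_of_mem (show s ∈ Ioc 0 δ from ⟨hs, hsa.trans haδ⟩)]
        exact hs.le.trans (hGa s ⟨hs, hsa⟩)
      · rw [indicator_of_notMem (fun h => hs h.1)]
  · rw [indicator_of_mem (show s ∈ Ioi a from has), Pi.one_apply, mul_one]
    have hu1 : u * (Ici u).indicator 1 s ≤ u :=
      mul_le_of_le_one_right hu.le (indicator_apply_le' (fun _ => le_rfl) (fun _ => zero_le_one))
    have hGs : -B ≤ (Ioc 0 δ).indicator G s := by
      by_cases h : s ∈ Ioc 0 δ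
      · rw [indicator_of_mem h]
        exact neg_le_of_abs_le (hGB s h)
      · rw [indicator_of_notMem h]
        linarith
    linarith

end Truncation

section TruncatedMoment

variable {Ω : Type*} [MeasurableSpace Ω] {P : Measure Ω} [IsFiniteMeasure P] {X : Ω → ℝ}
  {F G : ℝ → ℝ} {M B ε η δ a u : ℝ}

lemma integrable_indicator_comp (hX : Measurable X) (hG : Measurable G)
    (hGB : ∀ s ∈ Ioc 0 δ, |G s| ≤ B) : Integrable (fun ω => (Ioc 0 δ).indicator G (X ω)) P :=
  .of_bound ((hG.indicator measurableSet_Ioc).comp hX).aestronglyMeasurable |B| <|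
    .of_forall fun ω => by
      rw [norm_indicator_eq_indicator_norm]
      exact indicator_apply_le' (fun h => (hGB _ h).trans (le_abs_self B)) fun _ => abs_nonneg B

lemma abs_integral_sub_setIntegral_le (hX : Measurable X) (hXpos : ∀ᵐ ω ∂P, 0 < X ω)
    (hF : Measurable F) (hG : Measurable G) (hFM : ∀ s, |F s| ≤ M)
    (hGB : ∀ s ∈ Ioc 0 δ, |G s| ≤ B) (hε : 0 ≤ ε) (hη : 0 < η) (hηδ : η ≤ δ)
    (hFG : ∀ s ∈ Ioc 0 η, |F s - G s| ≤ ε * G s) :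
    |∫ ω, F (X ω) ∂P - ∫ ω in {ω | 0 < X ω ∧ X ω ≤ δ}, G (X ω) ∂P| ≤
      ε * ∫ ω in {ω | 0 < X ω ∧ X ω ≤ δ}, G (X ω) ∂P
        + (M + (1 + ε) * B) * P.real {ω | η < X ω} := by
  have hI : ∫ ω in {ω | 0 < X ω ∧ X ω ≤ δ}, G (X ω) ∂P = ∫ ω, (Ioc 0 δ).indicator G (X ω) ∂P :=
    setIntegral_preimage_eq_integral_indicator hX measurableSet_Ioc G
  have htail : P.real {ω | η < X ω} = ∫ ω, (Ioi η).indicator 1 (X ω) ∂P :=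
    (integral_indicator_one_comp hX measurableSet_Ioi).symm
  have hFi : Integrable (fun ω => F (X ω)) P :=
    .of_bound (hF.comp hX).aestronglyMeasurable M (.of_forall fun ω => hFM (X ω))
  have hGi := integrable_indicator_comp (P := P) hX hG hGB
  have h1i := integrable_indicator_one_comp (P := P) hX (measurableSet_Ioi (a := η))
  have hbound : Integrable (fun ω => ε * (Ioc 0 δ).indicator G (X ω)
      + (M + (1 + ε) * B) * (Ioi η).indicator 1 (X ω)) P :=
    (hGi.const_mul ε).add (h1i.const_mul _)
  rw [hI, htail, ← integral_sub hFi hGi]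
  calc |∫ ω, (F (X ω) - (Ioc 0 δ).indicator G (X ω)) ∂P|
      ≤ ∫ ω, (ε * (Ioc 0 δ).indicator G (X ω)
          + (M + (1 + ε) * B) * (Ioi η).indicator 1 (X ω)) ∂P := by
        rw [← Real.norm_eq_abs]
        exact norm_integral_le_of_norm_le hbound
          (hXpos.mono fun ω hω => abs_sub_indicator_Ioc_le hFM hGB hε hη hηδ hFG hω)
    _ = _ := by
        rw [integral_add (hGi.const_mul ε) (h1i.const_mul _), integral_const_mul,
          integral_const_mul]

lemma measureReal_sub_le_setIntegral (hX : Measurable X) (hG : Measurable G)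
    (hGa : ∀ s ∈ Ioc 0 a, s ≤ G s) (hGB : ∀ s ∈ Ioc 0 δ, |G s| ≤ B) (hu : 0 < u)
    (hua : u ≤ a) (haδ : a ≤ δ) :
    u * P.real {ω | u ≤ X ω} - (u + B) * P.real {ω | a < X ω} ≤
      ∫ ω in {ω | 0 < X ω ∧ X ω ≤ δ}, G (X ω) ∂P := by
  have hI : ∫ ω in {ω | 0 < X ω ∧ X ω ≤ δ}, G (X ω) ∂P = ∫ ω, (Ioc 0 δ).indicator G (X ω) ∂P :=
    setIntegral_preimage_eq_integral_indicator hX measurableSet_Ioc G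
  have hu' : P.real {ω | u ≤ X ω} = ∫ ω, (Ici u).indicator 1 (X ω) ∂P :=
    (integral_indicator_one_comp hX measurableSet_Ici).symm
  have ha' : P.real {ω | a < X ω} = ∫ ω, (Ioi a).indicator 1 (X ω) ∂P :=
    (integral_indicator_one_comp hX measurableSet_Ioi).symm
  have hui := (integrable_indicator_one_comp (P := P) hX (measurableSet_Ici (a := u))).const_mul u
  have hai := (integrable_indicator_one_comp (P := P) hX (measurableSet_Ioi (a := a))).const_mul
    (u + B)
  rw [hI, hu', ha', ← integral_const_mul, ← integral_const_mul, ← integral_sub hui hai]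
  exact integral_mono (hui.sub hai) (integrable_indicator_comp hX hG hGB)
    fun ω => mul_indicator_Ici_sub_le_indicator_Ioc hGa hGB hu hua haδ

end TruncatedMoment

lemma isBigO_of_eventually_mul_le {ι : Type*} {l : Filter ι} {u v : ι → ℝ} {κ : ℝ} (hκ : 0 < κ)
    (hu : ∀ᶠ i in l, 0 ≤ u i) (h : ∀ᶠ i in l, κ * u i ≤ v i) : u =O[l] v :=
  IsBigO.of_bound κ⁻¹ <| (hu.and h).mono fun i ⟨hui, hi⟩ => by
    rw [norm_of_nonneg hui, norm_of_nonneg ((mul_nonneg hκ.le hui).trans hi), le_inv_mul_iff₀ hκ]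
    exact hi

section Transfer

variable {Ω : Type*} [MeasurableSpace Ω] {P : Measure Ω} [IsFiniteMeasure P] {ι : Type*}
  {l : Filter ι} {X : ι → Ω → ℝ} {G : ℝ → ℝ} {B δ : ℝ}

theorem isEquivalent_integral_comp_setIntegral (hX : ∀ i, Measurable (X i))
    (hXpos : ∀ᶠ i in l, ∀ᵐ ω ∂P, 0 < X i ω) {F : ℝ → ℝ} {M : ℝ} (hF : Measurable F)
    (hG : Measurable G) (hFM : ∀ s, |F s| ≤ M) (hGB : ∀ s ∈ Ioc 0 δ, |G s| ≤ B) (hδ : 0 < δ)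
    (hFG : F ~[𝓝[>] 0] G) (hG0 : ∀ᶠ s in 𝓝[>] 0, 0 ≤ G s)
    (htail : ∀ η > 0, (fun i => P.real {ω | η < X i ω}) =o[l]
      fun i => ∫ ω in {ω | 0 < X i ω ∧ X i ω ≤ δ}, G (X i ω) ∂P) :
    (fun i => ∫ ω, F (X i ω) ∂P) ~[l]
      fun i => ∫ ω in {ω | 0 < X i ω ∧ X i ω ≤ δ}, G (X i ω) ∂P := by
  refine isLittleO_iff.2 fun ε hε => ?_
  obtain ⟨η, hη, hηδ, hFGη⟩ :
      ∃ η, 0 < η ∧ η ≤ δ ∧ ∀ s ∈ Ioc 0 η, |F s - G s| ≤ ε / 2 * G s := by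
    obtain ⟨η, hη, hsub⟩ :=
      mem_nhdsGT_iff_exists_Ioc_subset.1 ((hFG.isLittleO.def (half_pos hε)).and hG0)
    refine ⟨min η δ, lt_min hη hδ, min_le_right _ _, fun s hs => ?_⟩
    obtain ⟨hs, hGs⟩ := hsub ⟨hs.1, hs.2.trans (min_le_left _ _)⟩
    simpa only [Pi.sub_apply, Real.norm_eq_abs, abs_of_nonneg hGs] using hs
  have hK := ((htail η hη).const_mul_left (M + (1 + ε / 2) * B)).def (half_pos hε)
  filter_upwards [hXpos, hK] with i hi hKi
  have hdiff :=
    abs_integral_sub_setIntegral_le (hX i) hi hF hG hFM hGB (half_pos hε).le hη hηδ hFGη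
  simp only [Pi.sub_apply, Real.norm_eq_abs] at hKi ⊢
  have hI := mul_le_mul_of_nonneg_left
    (le_abs_self (∫ ω in {ω | 0 < X i ω ∧ X i ω ≤ δ}, G (X i ω) ∂P)) (half_pos hε).le
  linarith [le_abs_self ((M + (1 + ε / 2) * B) * P.real {ω | η < X i ω})]

lemma eventually_mul_le_setIntegral (hX : ∀ i, Measurable (X i)) (hG : Measurable G) {a κ : ℝ}
    (ha : 0 < a) (haδ : a ≤ δ) (hGa : ∀ s ∈ Ioc 0 a, s ≤ G s) (hGB : ∀ s ∈ Ioc 0 δ, |G s| ≤ B)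
    {u : ι → ℝ} (hu0 : ∀ᶠ i in l, 0 < u i) (hu : Tendsto u l (𝓝 0)) (hκ : 0 < κ)
    (hlow : ∀ᶠ i in l, κ ≤ P.real {ω | u i ≤ X i ω})
    (htail : (fun i => P.real {ω | a < X i ω}) =o[l] u) :
    ∀ᶠ i in l, κ / 2 * u i ≤ ∫ ω in {ω | 0 < X i ω ∧ X i ω ≤ δ}, G (X i ω) ∂P := by
  have hB : 0 ≤ B := (abs_nonneg _).trans (hGB a ⟨ha, haδ⟩)
  have hK := (htail.const_mul_left (1 + B)).def (half_pos hκ)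
  filter_upwards [hu0, hu.eventually_le_const (lt_min ha one_pos), hlow, hK]
    with i hui hua hlowi hKi
  have hI := measureReal_sub_le_setIntegral (P := P) (hX i) hG hGa hGB hui
    (hua.trans (min_le_left _ _)) haδ
  rw [Real.norm_eq_abs, Real.norm_eq_abs, abs_of_pos hui,
    abs_of_nonneg (mul_nonneg (by linarith) measureReal_nonneg)] at hKi
  have h1 : u i * κ ≤ u i * P.real {ω | u i ≤ X i ω} := mul_le_mul_of_nonneg_left hlowi hui.le
  have h2 : (u i + B) * P.real {ω | a < X i ω} ≤ (1 + B) * P.real {ω | a < X i ω} :=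
    mul_le_mul_of_nonneg_right (by linarith [min_le_right a 1]) measureReal_nonneg
  linarith

theorem tendsto_integral_div_setIntegral (hX : ∀ i, Measurable (X i))
    (hXpos : ∀ᶠ i in l, ∀ᵐ ω ∂P, 0 < X i ω) {F g : ℝ → ℝ} {M a c : ℝ} (hF : Measurable F)
    (hg : Measurable g) (hFM : ∀ s, |F s| ≤ M) (hgB : ∀ s ∈ Ioc 0 δ, |g s| ≤ B) (ha : 0 < a)
    (hga : ∀ s ∈ Ioc 0 a, s ≤ g s) (hc : 0 < c) (hδ : 0 < δ)
    (hFg : Tendsto (fun s => F s / (c * g s)) (𝓝[>] 0) (𝓝 1))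
    {u : ι → ℝ} {κ : ℝ} (hu0 : ∀ᶠ i in l, 0 < u i) (hu : Tendsto u l (𝓝 0)) (hκ : 0 < κ)
    (hlow : ∀ᶠ i in l, κ ≤ P.real {ω | u i ≤ X i ω})
    (htail : ∀ η > 0, (fun i => P.real {ω | η < X i ω}) =o[l] u) :
    Tendsto (fun i => (∫ ω, F (X i ω) ∂P) /
      (c * ∫ ω in {ω | 0 < X i ω ∧ X i ω ≤ δ}, g (X i ω) ∂P)) l (𝓝 1) := by
  have haδ : 0 < min a δ := lt_min ha hδ
  have hI := eventually_mul_le_setIntegral hX hg haδ (min_le_right _ _)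
    (fun s hs => hga s ⟨hs.1, hs.2.trans (min_le_left _ _)⟩) hgB hu0 hu hκ hlow (htail _ haδ)
  have hg0 : ∀ᶠ s in 𝓝[>] 0, 0 < c * g s :=
    mem_of_superset (Ioc_mem_nhdsGT ha) fun s hs => mul_pos hc (hs.1.trans_le (hga s hs))
  have hequiv := isEquivalent_integral_comp_setIntegral (G := fun s => c * g s) hX hXpos hF
    (hg.const_mul c) hFM (fun s hs => by
      rw [abs_mul, abs_of_pos hc]
      exact mul_le_mul_of_nonneg_left (hgB s hs) hc.le) hδ
    ((isEquivalent_iff_tendsto_one (hg0.mono fun _ h => h.ne')).2 hFg) (hg0.mono fun _ h => h.le)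
    fun η hη => by
      simp_rw [integral_const_mul]
      exact ((htail η hη).trans_isBigO (isBigO_of_eventually_mul_le (half_pos hκ)
        (hu0.mono fun _ h => h.le) hI)).const_mul_right hc.ne'
  simp_rw [integral_const_mul] at hequiv
  exact (isEquivalent_iff_tendsto_one ((hI.and hu0).mono fun _ h =>
    (mul_pos hc ((mul_pos (half_pos hκ) h.2).trans_le h.1)).ne')).1 hequiv

end Transfer

lemma isLittleO_exp_neg_mul_inv_comp_two_mul {φ : ℝ → ℝ} (hφ : Tendsto φ atTop atTop) {L : ℝ}
    (hφ2 : Tendsto (fun l => φ (2 * l) / φ l) atTop (𝓝 L)) {γ : ℝ} (hγ : 0 < γ) :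
    (fun l => exp (-γ * φ l)) =o[atTop] fun l => (φ (2 * l))⁻¹ := by
  have hpos : ∀ᶠ l in atTop, 0 < φ l := hφ.eventually_gt_atTop 0
  have hpos2 : ∀ᶠ l in atTop, 0 < φ (2 * l) :=
    tendsto_id.const_mul_atTop two_pos |> hφ.comp |>.eventually_gt_atTop 0
  have hexp : (fun l => exp (-γ * φ l)) =o[atTop] fun l => (φ l)⁻¹ := by
    simpa only [Function.comp_def, rpow_neg_one] using
      (isLittleO_exp_neg_mul_rpow_atTop hγ (-1)).comp_tendsto hφ
  have hdouble : (fun l => φ (2 * l)) =O[atTop] φ :=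
    isBigO_of_div_tendsto_nhds (hpos.mono fun _ h h0 => absurd h0 h.ne') L hφ2
  exact hexp.trans_isBigO (hdouble.inv_rev (hpos2.mono fun _ h h0 => absurd h0 h.ne'))

section InverseSubordinator

variable {Ω : Type*} [MeasurableSpace Ω] {P : Measure Ω} {D E : ℝ → Ω → ℝ} {φ : ℝ → ℝ}

lemma measureReal_lt_inverse_le [IsFiniteMeasure P] (hDmeas : ∀ u, Measurable (D u))
    (hDnonneg : ∀ u ω, 0 ≤ D u ω)
    (hLap : ∀ u : ℝ, 0 ≤ u → ∀ l : ℝ, 0 < l →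
      ∫ ω, exp (-l * D u ω) ∂P = exp (-u * φ l))
    (hE : ∀ t ω, E t ω = firstPassageTime (fun v => D v ω) t) {t η l : ℝ} (hη : 0 < η)
    (hl : 0 < l) :
    P.real {ω | η < E t ω} ≤ exp (l * t) * exp (-η * φ l) :=
  calc P.real {ω | η < E t ω}
      ≤ P.real {ω | D η ω ≤ t} := measureReal_mono fun ω h =>
        not_lt.1 fun htD => ((hE t ω).trans_le (firstPassageTime_le hη htD)).not_gt h
    _ ≤ exp (l * t) * exp (-η * φ l) := by
        rw [← hLap η hη.le l hl]
        exact measureReal_le_le_exp_mul_integral (hDmeas η) (hDnonneg η) hl.le t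

lemma isLittleO_measureReal_lt_inverse [IsFiniteMeasure P]
    (hDmeas : ∀ u, Measurable (D u)) (hDnonneg : ∀ u ω, 0 ≤ D u ω)
    (hLap : ∀ u : ℝ, 0 ≤ u → ∀ l : ℝ, 0 < l →
      ∫ ω, exp (-l * D u ω) ∂P = exp (-u * φ l))
    (hE : ∀ t ω, E t ω = firstPassageTime (fun v => D v ω) t)
    (hφ : Tendsto φ atTop atTop) {L : ℝ} (hφ2 : Tendsto (fun l => φ (2 * l) / φ l) atTop (𝓝 L))
    {γ : ℝ} (hγ : 0 < γ) :
    (fun t => P.real {ω | γ < E t ω}) =o[𝓝[>] 0] fun t => (φ (2 * t⁻¹))⁻¹ := by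
  refine IsBigO.trans_isLittleO ?_
    ((isLittleO_exp_neg_mul_inv_comp_two_mul hφ hφ2 hγ).comp_tendsto tendsto_inv_nhdsGT_zero)
  refine IsBigO.of_bound (exp 1) (eventually_mem_nhdsWithin.mono fun t (ht : 0 < t) => ?_)
  rw [norm_of_nonneg measureReal_nonneg, Function.comp_apply, norm_of_nonneg (exp_pos _).le]
  calc P.real {ω | γ < E t ω}
      ≤ exp (t⁻¹ * t) * exp (-γ * φ t⁻¹) :=
        measureReal_lt_inverse_le hDmeas hDnonneg hLap hE hγ (inv_pos.2 ht)
    _ = exp 1 * exp (-γ * φ t⁻¹) := by rw [inv_mul_cancel₀ ht.ne']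

lemma exp_neg_one_sub_exp_neg_two_le_measureReal [IsProbabilityMeasure P]
    (hDmeas : ∀ u, Measurable (D u)) (hDnonneg : ∀ u ω, 0 ≤ D u ω)
    (hpath : ∀ᵐ ω ∂P, MonotoneOn (fun v => D v ω) (Ici 0) ∧ ∀ M, ∃ v, 0 ≤ v ∧ M < D v ω)
    (hLap : ∀ u : ℝ, 0 ≤ u → ∀ l : ℝ, 0 < l →
      ∫ ω, exp (-l * D u ω) ∂P = exp (-u * φ l))
    (hE : ∀ t ω, E t ω = firstPassageTime (fun v => D v ω) t) {t : ℝ} (ht : 0 < t)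
    (hφt : 0 < φ (2 * t⁻¹)) :
    exp (-1) - exp (-2) ≤ P.real {ω | (φ (2 * t⁻¹))⁻¹ ≤ E t ω} := by
  have hu : 0 < (φ (2 * t⁻¹))⁻¹ := inv_pos.2 hφt
  have hl : 0 < 2 * t⁻¹ := by positivity
  have hchernoff := integral_exp_neg_mul_le (P := P) (hDmeas (φ (2 * t⁻¹))⁻¹) (hDnonneg _) hl.le t
  rw [hLap _ hu.le _ hl, neg_mul, inv_mul_cancel₀ hφt.ne', show -(2 * t⁻¹) * t = -2 by field_simp]
    at hchernoff
  have hsub : P.real {ω | D (φ (2 * t⁻¹))⁻¹ ω ≤ t} ≤ P.real {ω | (φ (2 * t⁻¹))⁻¹ ≤ E t ω} :=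
    ENNReal.toReal_mono (measure_ne_top P _) <| measure_mono_ae <| hpath.mono
      fun ω ⟨hmono, hunb⟩ h => (le_firstPassageTime hmono hunb hu h).trans_eq (hE t ω).symm
  linarith

end InverseSubordinator

theorem stmt_15_general
    {Ω : Type*} [MeasurableSpace Ω] (P : Measure Ω) [IsProbabilityMeasure P]
    (D : ℝ → Ω → ℝ) (φ : ℝ → ℝ) (E : ℝ → Ω → ℝ)
    (hDmeas : ∀ u : ℝ, Measurable (D u))
    (hDnonneg : ∀ u ω, 0 ≤ D u ω)
    (hD0 : ∀ᵐ ω ∂P, D 0 ω = 0)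
    (hDpath : ∀ᵐ ω ∂P,
      (∀ u : ℝ, 0 ≤ u → ContinuousWithinAt (fun v => D v ω) (Set.Ici u) u) ∧
      StrictMonoOn (fun u => D u ω) (Set.Ici (0 : ℝ)) ∧
      (∀ M : ℝ, ∃ u : ℝ, 0 ≤ u ∧ M < D u ω))
    (hφpos : ∀ l : ℝ, 0 < l → 0 < φ l)
    (hφtop : Tendsto φ atTop atTop)
    (hLap : ∀ u : ℝ, 0 ≤ u → ∀ l : ℝ, 0 < l →
      ∫ ω, Real.exp (-l * D u ω) ∂P = Real.exp (-u * φ l))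
    (hE : ∀ t ω, E t ω = sInf {u : ℝ | 0 < u ∧ t < D u ω})
    (hEmeas : ∀ t : ℝ, Measurable (E t))
    (β : ℝ)
    (hRV : ∀ a : ℝ, 0 < a →
      Tendsto (fun l => φ (a * l) / φ l) atTop (nhds (a ^ β)))
    (α : ℝ) (c : ℝ) (hc : 0 < c)
    (F : ℝ → ℝ) (hFmeas : Measurable F) (hFnn : ∀ s : ℝ, 0 ≤ F s)
    (hFbd : ∃ M : ℝ, ∀ s : ℝ, F s ≤ M)
    (hFasym : Tendsto (fun s => F s / (c * falpha α s)) (nhdsWithin 0 (Set.Ioi 0)) (nhds 1))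
    (δ : ℝ) (hδ : 0 < δ) :
    Tendsto
      (fun t =>
        (∫ ω, F (E t ω) ∂P) /
        (c * ∫ ω in {ω | 0 < E t ω ∧ E t ω ≤ δ}, falpha α (E t ω) ∂P))
      (nhdsWithin 0 (Set.Ioi 0)) (nhds 1) := by
  obtain ⟨M, hM⟩ := hFbd
  obtain ⟨B, hB⟩ := exists_abs_falpha_le α δ
  have hφt : ∀ᶠ t in 𝓝[>] (0 : ℝ), 0 < t ∧ 0 < φ (2 * t⁻¹) :=
    eventually_mem_nhdsWithin.mono fun t (ht : 0 < t) => ⟨ht, hφpos _ (by positivity)⟩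
  refine tendsto_integral_div_setIntegral hEmeas ?_ hFmeas (measurable_falpha α)
    (fun s => (abs_of_nonneg (hFnn s)).trans_le (hM s)) hB (exp_pos (-1))
    (fun s hs => self_le_falpha α hs.1 hs.2) hc hδ hFasym (hφt.mono fun _ h => inv_pos.2 h.2)
    (hφtop.comp (tendsto_inv_nhdsGT_zero.const_mul_atTop two_pos)).inv_tendsto_atTop
    (sub_pos.2 (exp_lt_exp.2 (by norm_num : (-2 : ℝ) < -1)))
    (hφt.mono fun t ⟨ht, hφ⟩ => exp_neg_one_sub_exp_neg_two_le_measureReal hDmeas hDnonneg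
      (hDpath.mono fun _ h => ⟨h.2.1.monotoneOn, h.2.2⟩) hLap hE ht hφ)
    fun η hη => isLittleO_measureReal_lt_inverse hDmeas hDnonneg hLap hE hφtop (hRV 2 two_pos) hη
  filter_upwards [hφt] with t ⟨ht, _⟩
  filter_upwards [hD0, hDpath] with ω h0 ⟨hcont, hmono, hunb⟩
  exact (hE t ω).trans_gt (firstPassageTime_pos h0 (hcont 0 le_rfl) hmono.monotoneOn hunb ht)

/-- Transfer of small-time asymptotics through an inverse subordinator: if `φ` is regularly
varying at `∞` with index `β ∈ (0,1)`, `α ∈ (0,2)`, `c > 0`, and `F` is a bounded nonnegative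
measurable function with `F(s) ~ c fα(s)` as `s ↓ 0`, then for every `δ > 0`,
`E[F(E_t)] ~ c E[fα(E_t) ; E_t ≤ δ]` as `t ↓ 0`. -/
theorem stmt_15
    {Ω : Type*} [MeasurableSpace Ω] (P : Measure Ω) [IsProbabilityMeasure P]
    (D : ℝ → Ω → ℝ) (φ : ℝ → ℝ) (E : ℝ → Ω → ℝ)
    (hDmeas : ∀ u : ℝ, Measurable (D u))
    (hDnonneg : ∀ u ω, 0 ≤ D u ω)
    (hD0 : ∀ᵐ ω ∂P, D 0 ω = 0)
    (hDpath : ∀ᵐ ω ∂P,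
      (∀ u : ℝ, 0 ≤ u → ContinuousWithinAt (fun v => D v ω) (Set.Ici u) u) ∧
      StrictMonoOn (fun u => D u ω) (Set.Ici (0 : ℝ)) ∧
      (∀ M : ℝ, ∃ u : ℝ, 0 ≤ u ∧ M < D u ω))
    (hφpos : ∀ l : ℝ, 0 < l → 0 < φ l)
    (hφmono : StrictMonoOn φ (Set.Ioi (0 : ℝ)))
    (hφ0 : Tendsto φ (nhdsWithin 0 (Set.Ioi 0)) (nhds 0))
    (hφtop : Tendsto φ atTop atTop)
    (hLap : ∀ u : ℝ, 0 ≤ u → ∀ l : ℝ, 0 < l →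
      ∫ ω, Real.exp (-l * D u ω) ∂P = Real.exp (-u * φ l))
    (hE : ∀ t ω, E t ω = sInf {u : ℝ | 0 < u ∧ t < D u ω})
    (hEmeas : ∀ t : ℝ, Measurable (E t))
    (β : ℝ) (hβ0 : 0 < β) (hβ1 : β < 1)
    (hRV : ∀ a : ℝ, 0 < a →
      Tendsto (fun l => φ (a * l) / φ l) atTop (nhds (a ^ β)))
    (α : ℝ) (hα0 : 0 < α) (hα2 : α < 2) (c : ℝ) (hc : 0 < c)
    (F : ℝ → ℝ) (hFmeas : Measurable F) (hFnn : ∀ s : ℝ, 0 ≤ F s)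
    (hFbd : ∃ M : ℝ, ∀ s : ℝ, F s ≤ M)
    (hFasym : Tendsto (fun s => F s / (c * falpha α s)) (nhdsWithin 0 (Set.Ioi 0)) (nhds 1))
    (δ : ℝ) (hδ : 0 < δ) :
    Tendsto
      (fun t =>
        (∫ ω, F (E t ω) ∂P) /
        (c * ∫ ω in {ω | 0 < E t ω ∧ E t ω ≤ δ}, falpha α (E t ω) ∂P))
      (nhdsWithin 0 (Set.Ioi 0)) (nhds 1) :=
  stmt_15_general P D φ E hDmeas hDnonneg hD0 hDpath hφpos hφtop hLap hE hEmeas β hRV α c hc F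
    hFmeas hFnn hFbd hFasym δ hδ
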